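/- (Horn's lemma) Let x and y be real vectors of length N with x ≺ y. Then there exists a real orthogonal N×N matrix W such that x_i = Σ_k (W_{ik})² y_k for every i; equivalently, x = O y for the orthostochastic matrix O with entries O_{ik} = (W_{ik})². -/

import Mathlib

/-!
Horn's inductive argument. Sort `y` decreasingly and let `x₀` be the largest entry of `x`. If
`x₀ ≤ y_k` for every `k`, equality of the totals forces `x` and `y` to be the same constant
vector. Otherwise there are consecutive entries `y_d ≥ x₀ > y_{d+1}`; write
`x₀ = c² y_d + s² y_{d+1}` with `c² + s² = 1`. Removing `x₀` from `x`, and replacing the pair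
`y_d, y_{d+1}` of `y` by the single entry `y_d + y_{d+1} - x₀`, preserves majorization, so by
induction the shorter vectors are related by an orthogonal `W'`. Then `diag(1, W')` composed
with the plane rotation by `(c, s)` in the coordinates `d, d + 1` relates `x` and `y`.
-/

open Matrix

/-- `Majorized x y` means `x ≺ y`: every partial sum of entries of `x` (over any set of
indices) is dominated by the sum of `y` over some set of indices of the same cardinality
(equivalently, sums of the `m` largest entries are ordered), and total sums agree. -/
def Majorized {N : ℕ} (x y : Fin N → ℝ) : Prop :=
  (∀ s : Finset (Fin N), ∃ t : Finset (Fin N), t.card = s.card ∧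
      ∑ i ∈ s, x i ≤ ∑ i ∈ t, y i) ∧
  ∑ i, x i = ∑ i, y i

open Finset

theorem Finset.sum_le_sum_of_card_eq {α M : Type*} [AddCommMonoid M] [LinearOrder M]
    [IsOrderedAddMonoid M] {s t : Finset α} {f : α → M} (hst : #s = #t)
    (h : ∀ i ∈ s, ∀ j ∈ t, f i ≤ f j) : ∑ i ∈ s, f i ≤ ∑ j ∈ t, f j := by
  rcases s.eq_empty_or_nonempty with rfl | hs
  · simp [card_eq_zero.1 hst.symm]
  obtain ⟨i, hi, hmax⟩ := s.exists_max_image f hs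
  calc ∑ i ∈ s, f i ≤ #s • f i := sum_le_card_nsmul _ _ _ hmax
    _ = #t • f i := by rw [hst]
    _ ≤ ∑ j ∈ t, f j := card_nsmul_le_sum _ _ _ (h i hi)

theorem Antitone.sum_le_sum_filter_val_lt {n : ℕ} {M : Type*} [AddCommMonoid M] [LinearOrder M]
    [IsOrderedAddMonoid M] {Y : Fin n → M} (hY : Antitone Y) (T : Finset (Fin n)) :
    ∑ j ∈ T, Y j ≤ ∑ j ∈ ({j | (j : ℕ) < #T} : Finset (Fin n)), Y j := by
  set F : Finset (Fin n) := {j | (j : ℕ) < #T}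
  have hF : #T = #F := by
    have hT := T.card_le_univ
    rw [Fintype.card_fin] at hT
    simp only [F, Fin.card_filter_val_lt, hT, min_eq_right]
  rw [← sum_inter_add_sum_sdiff T F, ← sum_inter_add_sum_sdiff F T, inter_comm]
  refine add_le_add_right (sum_le_sum_of_card_eq (card_sdiff_comm hF) fun l hl j hj => hY ?_) _
  simp only [F, mem_sdiff, mem_filter, mem_univ, true_and] at hl hj
  exact Fin.le_def.2 (by omega)

theorem Fin.exists_castSucc_and_not_succ {n : ℕ} {P : Fin (n + 1) → Prop} (h0 : P 0)
    (hlast : ¬ P (Fin.last n)) : ∃ i : Fin n, P i.castSucc ∧ ¬ P i.succ := by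
  by_contra! h
  exact hlast (Fin.induction (motive := P) h0 h _)

theorem exists_perm_antitone_comp {n : ℕ} {α : Type*} [LinearOrder α] (y : Fin n → α) :
    ∃ σ : Equiv.Perm (Fin n), Antitone (y ∘ σ) :=
  ⟨Tuple.sort (OrderDual.toDual ∘ y), Tuple.monotone_sort (OrderDual.toDual ∘ y)⟩

theorem exists_sq_add_sq_eq_one_of_mem_segment {a b x : ℝ} (hx : x ∈ segment ℝ a b) :
    ∃ c s : ℝ, c ^ 2 + s ^ 2 = 1 ∧ x = c ^ 2 * a + s ^ 2 * b := by
  obtain ⟨θ, φ, hθ, hφ, hθφ, rfl⟩ := hx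
  exact ⟨√θ, √φ, by rw [Real.sq_sqrt hθ, Real.sq_sqrt hφ, hθφ],
    by rw [Real.sq_sqrt hθ, Real.sq_sqrt hφ, smul_eq_mul, smul_eq_mul]⟩

section

variable {ι κ : Type*} [Fintype ι] [Fintype κ]

def IsMajorizedBy (x : ι → ℝ) (y : κ → ℝ) : Prop :=
  (∀ s : Finset ι, ∃ t : Finset κ, #t = #s ∧ ∑ i ∈ s, x i ≤ ∑ k ∈ t, y k) ∧
    ∑ i, x i = ∑ k, y k

theorem IsMajorizedBy.comp_equiv {κ' : Type*} [Fintype κ'] {x : ι → ℝ} {y : κ → ℝ}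
    (h : IsMajorizedBy x y) (f : κ' ≃ κ) : IsMajorizedBy x (y ∘ f) := by
  refine ⟨fun s => ?_, h.2.trans (f.sum_comp y).symm⟩
  obtain ⟨t, hcard, hle⟩ := h.1 s
  exact ⟨t.map f.symm.toEmbedding, by simpa using hcard, by simpa [sum_map] using hle⟩

/-- The pair `Y d, Y (d + 1)` is merged into the single entry `Y d + Y (d + 1) - x i₀`, stored
at index `d`. -/
theorem IsMajorizedBy.subtype_ne [DecidableEq ι] {n : ℕ} {x : ι → ℝ} {Y : Fin (n + 1) → ℝ}
    (hY : Antitone Y) (h : IsMajorizedBy x Y) (i₀ : ι) (d : Fin n) :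
    IsMajorizedBy (fun i : {i // i ≠ i₀} => x i) (fun l : {l // l ≠ d.succ} =>
      Function.update Y d.castSucc (Y d.castSucc + Y d.succ - x i₀) l) := by
  set p := d.castSucc
  set q := d.succ
  set z := Function.update Y p (Y p + Y q - x i₀)
  have hpq : p ≠ q := Fin.castSucc_lt_succ.ne
  have hsum_of_mem : ∀ F : Finset (Fin (n + 1)), p ∈ F → q ∈ F →
      ∑ l ∈ F.subtype (· ≠ q), z l = ∑ l ∈ F, Y l - x i₀ := by
    intro F hp hq
    rw [sum_subtype_eq_sum_filter, filter_ne', sum_update_of_mem (mem_erase.2 ⟨hpq, hp⟩),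
      ← add_sum_erase F Y hq, sum_eq_add_sum_sdiff_singleton_of_mem (mem_erase.2 ⟨hpq, hp⟩)]
    ring
  have hsum_of_not_mem : ∀ F : Finset (Fin (n + 1)), p ∉ F → q ∉ F →
      ∑ l ∈ F.subtype (· ≠ q), z l = ∑ l ∈ F, Y l := by
    intro F hp hq
    rw [sum_subtype_eq_sum_filter, filter_true_of_mem fun l hl => ne_of_mem_of_not_mem hl hq]
    exact sum_congr rfl fun l hl => Function.update_of_ne (ne_of_mem_of_not_mem hl hp) _ _
  refine ⟨fun s => ?_, ?_⟩
  · set s' := s.map (Function.Embedding.subtype _)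
    have hs' : ∑ i ∈ s', x i = ∑ i ∈ s, x i := sum_map _ _ _
    have hi₀ : i₀ ∉ s' := by simp [s']
    obtain ⟨T, hT, hle⟩ := h.1 (insert i₀ s')
    have hTn : #s + 1 ≤ n + 1 := by
      simpa [hT, hi₀, s'] using T.card_le_univ
    -- `s` is compared with the `#s` largest entries of `Y` when these avoid `d, d + 1`, and
    -- `insert i₀ s` with the `#s + 1` largest entries otherwise
    by_cases hsd : #s ≤ d
    · obtain ⟨T', hT', hle'⟩ := h.1 s'
      set F : Finset (Fin (n + 1)) := {l | (l : ℕ) < #s}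
      have hF : #F = #s := by simp only [F, Fin.card_filter_val_lt]; omega
      have hpF : p ∉ F := by
        simp only [F, p, mem_filter, mem_univ, true_and, Fin.val_castSucc]; omega
      have hqF : q ∉ F := by simp only [F, q, mem_filter, mem_univ, true_and, Fin.val_succ]; omega
      refine ⟨F.subtype (· ≠ q), ?_, ?_⟩
      · rw [card_subtype, filter_true_of_mem fun l hl => ne_of_mem_of_not_mem hl hqF, hF]
      · rw [hsum_of_not_mem F hpF hqF, ← hs']
        refine hle'.trans ((hY.sum_le_sum_filter_val_lt T').trans_eq ?_)
        rw [hT', card_map]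
    · set F : Finset (Fin (n + 1)) := {l | (l : ℕ) < #s + 1}
      have hF : #F = #s + 1 := by simp only [F, Fin.card_filter_val_lt]; omega
      have hpF : p ∈ F := by
        simp only [F, p, mem_filter, mem_univ, true_and, Fin.val_castSucc]; omega
      have hqF : q ∈ F := by simp only [F, q, mem_filter, mem_univ, true_and, Fin.val_succ]; omega
      refine ⟨F.subtype (· ≠ q), ?_, ?_⟩
      · rw [card_subtype, filter_ne', card_erase_of_mem hqF, hF, Nat.add_sub_cancel]
      · rw [hsum_of_mem F hpF hqF]
        have hTF : ∑ l ∈ T, Y l ≤ ∑ l ∈ F, Y l := by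
          refine (hY.sum_le_sum_filter_val_lt T).trans_eq ?_
          rw [hT, card_insert_of_notMem hi₀, card_map]
        rw [sum_insert hi₀, hs'] at hle
        linarith
  · have hx := Fintype.sum_eq_add_sum_subtype_ne x i₀
    have hz := hsum_of_mem univ (mem_univ p) (mem_univ q)
    rw [subtype_univ] at hz
    linarith [h.2]

variable [DecidableEq ι] [DecidableEq κ]

def IsOrthostochasticImage (x : ι → ℝ) (y : κ → ℝ) : Prop :=
  ∃ W : Matrix ι κ ℝ, W * Wᵀ = 1 ∧ Wᵀ * W = 1 ∧ ∀ i, x i = ∑ k, W i k ^ 2 * y k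

theorem IsOrthostochasticImage.of_comp_equiv {ι' κ' : Type*} [Fintype ι'] [DecidableEq ι']
    [Fintype κ'] [DecidableEq κ'] {x : ι → ℝ} {y : κ → ℝ} (e : ι' ≃ ι) (f : κ' ≃ κ)
    (h : IsOrthostochasticImage (x ∘ e) (y ∘ f)) : IsOrthostochasticImage x y := by
  obtain ⟨W, h₁, h₂, hx⟩ := h
  refine ⟨W.submatrix e.symm f.symm, ?_, ?_, fun i => ?_⟩
  · rw [transpose_submatrix, submatrix_mul_equiv, h₁, submatrix_one_equiv]
  · rw [transpose_submatrix, submatrix_mul_equiv, h₂, submatrix_one_equiv]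
  · simpa [← f.symm.sum_comp] using hx (e.symm i)

theorem isOrthostochasticImage_refl (y : κ → ℝ) : IsOrthostochasticImage y y :=
  ⟨1, by simp, by simp, fun k => by simp [one_apply]⟩

theorem isOrthostochasticImage_const (h : Fintype.card ι = Fintype.card κ) (c : ℝ) :
    IsOrthostochasticImage (fun _ : ι => c) (fun _ : κ => c) :=
  (isOrthostochasticImage_refl fun _ : κ => c).of_comp_equiv
    (Fintype.equivOfCardEq h).symm (Equiv.refl κ)

theorem isOrthostochasticImage_of_le_of_le (hcard : Fintype.card ι = Fintype.card κ)
    {x : ι → ℝ} {y : κ → ℝ} (hsum : ∑ i, x i = ∑ k, y k) {c : ℝ} (hx : ∀ i, x i ≤ c)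
    (hy : ∀ k, c ≤ y k) : IsOrthostochasticImage x y := by
  have hc : ∑ _i : ι, c = ∑ _k : κ, c := by simp [hcard]
  have h₁ : ∑ i, x i ≤ ∑ _i : ι, c := sum_le_sum fun i _ => hx i
  have h₂ : ∑ _k : κ, c ≤ ∑ k, y k := sum_le_sum fun k _ => hy k
  have hxc := (sum_eq_sum_iff_of_le fun i _ => hx i).1 (by linarith)
  have hyc := (sum_eq_sum_iff_of_le fun k _ => hy k).1 (by linarith)
  obtain rfl : x = fun _ => c := funext fun i => hxc i (mem_univ i)
  obtain rfl : y = fun _ => c := funext fun k => (hyc k (mem_univ k)).symm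
  exact isOrthostochasticImage_const hcard c

theorem IsOrthostochasticImage.optionElim_update {x : ι → ℝ} {z : κ → ℝ}
    (h : IsOrthostochasticImage x z) (p : κ) {a b x₀ : ℝ} (hx₀ : x₀ ∈ segment ℝ a b)
    (hp : z p + x₀ = a + b) :
    IsOrthostochasticImage (fun i : Option ι => i.elim x₀ x)
      (fun k : Option κ => k.elim b (Function.update z p a)) := by
  obtain ⟨W, hWWt, hWtW, hx⟩ := h
  obtain ⟨c, s, hcs, rfl⟩ := exists_sq_add_sq_eq_one_of_mem_segment hx₀
  -- `V = diag(1, W) * G`, where `G` is the rotation by `(c, s)` in the coordinates `none, some p`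
  let μ : κ → ℝ := Function.update 1 p (-s)
  let V : Matrix (Option ι) (Option κ) ℝ := fun i k =>
    i.elim (k.elim s (Pi.single p c)) fun i => k.elim (c * W i p) fun l => μ l * W i l
  have hμp : μ p = -s := by simp [μ]
  have hμ : ∀ l : {l // l ≠ p}, μ l = 1 := fun l => by simp [μ, l.2]
  have hsingle : ∀ l : {l // l ≠ p}, (Pi.single p c : κ → ℝ) l = 0 := fun l => by simp [l.2]
  have hrow : ∀ i j, W i p * W j p + ∑ l : {l // l ≠ p}, W i l * W j l = (1 : Matrix ι ι ℝ) i j :=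
    fun i j => by rw [← hWWt, mul_apply, Fintype.sum_eq_add_sum_subtype_ne _ p]; rfl
  have hcol : ∀ α β k l, ∑ i, α * W i k * (β * W i l) = α * β * (1 : Matrix κ κ ℝ) k l :=
    fun α β k l => by
      rw [← hWtW, mul_apply, mul_sum]
      exact sum_congr rfl fun _ _ => by rw [transpose_apply]; ring
  refine ⟨V, ?_, ?_, ?_⟩
  · ext (_ | i) (_ | j) <;> simp only [mul_apply, Fintype.sum_option, transpose_apply] <;>
      rw [Fintype.sum_eq_add_sum_subtype_ne _ p] <;>
      simp only [V, Option.elim_none, Option.elim_some, Pi.single_eq_same, hμp, hμ, hsingle,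
        neg_mul, mul_neg, one_mul, mul_zero, zero_mul, sum_const_zero, add_zero, one_apply_eq,
        one_apply_ne, ne_eq, reduceCtorEq, not_false_eq_true]
    · linear_combination hcs
    · ring
    · ring
    · simp only [one_apply, Option.some_inj] at hrow ⊢
      linear_combination hrow i j + W i p * W j p * hcs
  · ext (_ | k) (_ | l) <;> simp only [mul_apply, Fintype.sum_option, transpose_apply] <;>
      simp only [V, Option.elim_none, Option.elim_some, hcol, one_apply, mul_ite, mul_one,
        mul_zero, Option.some.injEq, reduceCtorEq, ↓reduceIte]
    · linear_combination hcs
    · rcases eq_or_ne l p with rfl | hl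
      · simp only [Pi.single_eq_same, ↓reduceIte, hμp]; ring
      · simp [hl, Ne.symm hl]
    · rcases eq_or_ne k p with rfl | hk
      · simp only [Pi.single_eq_same, ↓reduceIte, hμp]; ring
      · simp [hk]
    · rcases eq_or_ne k l with rfl | hkl
      · rcases eq_or_ne k p with rfl | hk
        · simp only [Pi.single_eq_same, ↓reduceIte, hμp]; linear_combination hcs
        · simp [hk, μ]
      · rcases eq_or_ne k p with rfl | hk
        · simp [hkl, Ne.symm hkl]
        · simp [hk, hkl]
  · have hupd : ∀ l : {l // l ≠ p}, Function.update z p a l = z l := fun l =>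
      Function.update_of_ne l.2 _ _
    have hx' : ∀ i, x i = W i p ^ 2 * z p + ∑ l : {l // l ≠ p}, W i l ^ 2 * z l := fun i => by
      rw [hx, Fintype.sum_eq_add_sum_subtype_ne _ p]
    rintro (_ | i) <;> simp only [Fintype.sum_option] <;>
      rw [Fintype.sum_eq_add_sum_subtype_ne _ p] <;>
      simp only [V, Option.elim_none, Option.elim_some, Pi.single_eq_same, Function.update_self,
        hμp, hμ, hsingle, hupd, ne_eq, OfNat.ofNat_ne_zero, not_false_eq_true, zero_pow, one_mul,
        zero_mul, sum_const_zero, add_zero]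
    · ring
    · linear_combination hx' i + W i p ^ 2 * hp - W i p ^ 2 * (a + b) * hcs

end

theorem IsMajorizedBy.isOrthostochasticImage {ι : Type*} [Fintype ι] [DecidableEq ι] {n : ℕ}
    {x : ι → ℝ} {y : Fin n → ℝ} (hι : Fintype.card ι = n) (h : IsMajorizedBy x y) :
    IsOrthostochasticImage x y := by
  induction n generalizing ι with
  | zero =>
    have : IsEmpty ι := Fintype.card_eq_zero_iff.1 hι
    exact ⟨0, Subsingleton.elim _ _, Subsingleton.elim _ _, isEmptyElim⟩
  | succ n ih =>
    obtain ⟨σ, hσ⟩ := exists_perm_antitone_comp y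
    refine IsOrthostochasticImage.of_comp_equiv (Equiv.refl ι) σ ?_
    set Y := y ∘ σ
    have hY : IsMajorizedBy x Y := h.comp_equiv σ
    have : Nonempty ι := Fintype.card_pos_iff.1 (by omega)
    obtain ⟨i₀, hi₀⟩ := Finite.exists_max x
    by_cases hlast : x i₀ ≤ Y (Fin.last n)
    · exact isOrthostochasticImage_of_le_of_le (by simp [hι]) hY.2 hi₀
        fun k => hlast.trans (hσ (Fin.le_last k))
    have h0 : x i₀ ≤ Y 0 := by
      obtain ⟨t, ht, hle⟩ := hY.1 {i₀}
      obtain ⟨k, rfl⟩ := card_eq_one.1 (ht.trans (card_singleton i₀))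
      rw [sum_singleton, sum_singleton] at hle
      exact hle.trans (hσ (Fin.zero_le k))
    obtain ⟨d, hd, hd'⟩ := Fin.exists_castSucc_and_not_succ (P := fun k => x i₀ ≤ Y k) h0 hlast
    have hcard : Fintype.card {i // i ≠ i₀} = n := by simp [Fintype.card_subtype_compl, hι]
    have htail := (ih hcard ((hY.subtype_ne hσ i₀ d).comp_equiv (finSuccAboveEquiv d.succ))
      ).of_comp_equiv (x := fun i : {i // i ≠ i₀} => x i) (Equiv.refl _) (finSuccAboveEquiv d.succ)
    have hseg : x i₀ ∈ segment ℝ (Y d.castSucc) (Y d.succ) := by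
      rw [segment_eq_uIcc, Set.mem_uIcc]
      exact Or.inr ⟨(not_le.1 hd').le, hd⟩
    have hglue := htail.optionElim_update ⟨d.castSucc, Fin.castSucc_lt_succ.ne⟩ hseg (by simp)
    refine IsOrthostochasticImage.of_comp_equiv (Equiv.optionSubtypeNe i₀)
      (Equiv.optionSubtypeNe d.succ) ?_
    convert hglue using 1
    · funext i; cases i <;> rfl
    · funext k
      rcases k with _ | ⟨l, hl⟩
      · rfl
      · by_cases hlp : l = d.castSucc <;> simp [hlp, Function.update_apply]

theorem horn_lemma (N : ℕ) (x y : Fin N → ℝ) (h : Majorized x y) :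
    ∃ W : Matrix (Fin N) (Fin N) ℝ,
      W * Wᵀ = 1 ∧ Wᵀ * W = 1 ∧ ∀ i, x i = ∑ k, W i k ^ 2 * y k :=
  IsMajorizedBy.isOrthostochasticImage (Fintype.card_fin N) h
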